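/- arXiv:1409.2000 — 2 statements merged into one kernel-verified Lean document; each statement's English description precedes it below -/
import Mathlib

section
/- Let $X$ be a non-negative random variable with independent copy $X'$, and define $\kappa(X) = \mathbb{E}|\tfrac{X-X'}{X+X'}|$ with convention $0/0=0$. Then: (a) $\kappa(X+Y) \leq \kappa(X) + \kappa(Y)$ for non-negative $X, Y$ (with $(X',Y')$ an independent copy of $(X,Y)$); (b) $\kappa(\lambda X) = \kappa(X)$ for any $\lambda > 0$; (c) $\kappa(1/X) = \kappa(X)$ when $X > 0$ almost surely. -/
open MeasureTheory

/-- The discrepancy `κ` of (the law of) a nonnegative random variable: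
`κ(X) = 𝔼|(X - X')/(X + X')|` with `X'` an independent copy of `X`
(convention `0/0 = 0`, which is the Lean convention for division). -/
noncomputable def kappa (μ : Measure ℝ) : ℝ :=
  ∫ p : ℝ × ℝ, |(p.1 - p.2) / (p.1 + p.2)| ∂(μ.prod μ)

/-!
Each property is a pointwise fact about the integrand `|(x - y) / (x + y)|` of `κ`, integrated
against the law of the pair `(X, X')`. Scaling leaves it unchanged, and so does inversion
(multiply numerator and denominator by `x y`). For sums, the triangle inequality in the
numerator followed by shrinking the denominator `a + b + a' + b'` to `a + a'`, resp. `b + b'`, gives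
`|(a + b) - (a' + b')| / (a + b + a' + b') ≤ |a - a'| / (a + a') + |b - b'| / (b + b')`,
which is then integrated against the law of `((X, Y), (X', Y'))`.
-/

theorem abs_sub_div_add_le_one {x y : ℝ} (hx : 0 ≤ x) (hy : 0 ≤ y) :
    |(x - y) / (x + y)| ≤ 1 := by
  rw [abs_div, abs_of_nonneg (add_nonneg hx hy)]
  exact div_le_one_of_le₀ (abs_le.2 ⟨by linarith, by linarith⟩) (add_nonneg hx hy)

theorem abs_add_sub_add_div_le {a a' b b' : ℝ} (ha : 0 ≤ a) (ha' : 0 ≤ a') (hb : 0 ≤ b)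
    (hb' : 0 ≤ b') :
    |((a + b) - (a' + b')) / ((a + b) + (a' + b'))| ≤
      |(a - a') / (a + a')| + |(b - b') / (b + b')| := by
  rcases (add_nonneg ha ha').eq_or_lt with h | hA
  · obtain ⟨rfl, rfl⟩ : a = 0 ∧ a' = 0 := ⟨by linarith, by linarith⟩
    simp
  rcases (add_nonneg hb hb').eq_or_lt with h | hB
  · obtain ⟨rfl, rfl⟩ : b = 0 ∧ b' = 0 := ⟨by linarith, by linarith⟩
    simp
  rw [abs_div, abs_div, abs_div, abs_of_pos hA, abs_of_pos hB,
    abs_of_pos (by linarith : 0 < (a + b) + (a' + b'))]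
  calc |(a + b) - (a' + b')| / ((a + b) + (a' + b'))
      ≤ (|a - a'| + |b - b'|) / ((a + b) + (a' + b')) := by
        gcongr
        rw [add_sub_add_comm]
        exact abs_add_le _ _
    _ = |a - a'| / ((a + b) + (a' + b')) + |b - b'| / ((a + b) + (a' + b')) := add_div _ _ _
    _ ≤ |a - a'| / (a + a') + |b - b'| / (b + b') := by
        gcongr <;> linarith

theorem abs_mul_sub_div_mul_add {l : ℝ} (hl : l ≠ 0) (x y : ℝ) :
    |(l * x - l * y) / (l * x + l * y)| = |(x - y) / (x + y)| := by
  rw [← mul_sub, ← mul_add, mul_div_mul_left _ _ hl]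

theorem abs_one_div_sub_div_one_div_add (x y : ℝ) :
    |(1 / x - 1 / y) / (1 / x + 1 / y)| = |(x - y) / (x + y)| := by
  rcases eq_or_ne x 0 with rfl | hx
  · rcases eq_or_ne y 0 with rfl | hy <;> simp [*]
  rcases eq_or_ne y 0 with rfl | hy
  · simp [hx]
  rw [show (1 / x - 1 / y) / (1 / x + 1 / y) = (y - x) / (y + x) by field_simp,
    ← neg_sub x y, add_comm, neg_div, abs_neg]

section

variable {α : Type*} [MeasurableSpace α] {μ : Measure α}

theorem kappa_map [SFinite μ] {f : α → ℝ} (hf : Measurable f) :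
    kappa (μ.map f) = ∫ p : α × α, |(f p.1 - f p.2) / (f p.1 + f p.2)| ∂(μ.prod μ) := by
  rw [kappa, Measure.map_prod_map _ _ hf hf, integral_map (hf.prodMap hf).aemeasurable
    (by fun_prop : Measurable fun p : ℝ × ℝ => |(p.1 - p.2) / (p.1 + p.2)|).aestronglyMeasurable]
  rfl

theorem integrable_abs_sub_div_add [IsFiniteMeasure μ] {f : α → ℝ} (hf : Measurable f)
    (h0 : ∀ᵐ x ∂μ, 0 ≤ f x) :
    Integrable (fun p : α × α => |(f p.1 - f p.2) / (f p.1 + f p.2)|) (μ.prod μ) := by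
  refine .of_bound (by fun_prop : Measurable _).aestronglyMeasurable 1 ?_
  filter_upwards [Measure.quasiMeasurePreserving_fst.ae h0,
    Measure.quasiMeasurePreserving_snd.ae h0] with p h1 h2
  rw [Real.norm_eq_abs, abs_abs]
  exact abs_sub_div_add_le_one h1 h2

theorem kappa_map_add_le [IsFiniteMeasure μ] {f g : α → ℝ} (hf : Measurable f)
    (hg : Measurable g) (hf0 : ∀ᵐ x ∂μ, 0 ≤ f x) (hg0 : ∀ᵐ x ∂μ, 0 ≤ g x) :
    kappa (μ.map fun x => f x + g x) ≤ kappa (μ.map f) + kappa (μ.map g) := by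
  have hfi := integrable_abs_sub_div_add hf hf0
  have hgi := integrable_abs_sub_div_add hg hg0
  rw [kappa_map hf, kappa_map hg, kappa_map (f := fun x => f x + g x) (hf.add hg),
    ← integral_add hfi hgi]
  refine integral_mono_of_nonneg (.of_forall fun _ => abs_nonneg _) (hfi.add hgi) ?_
  filter_upwards [Measure.quasiMeasurePreserving_fst.ae hf0,
    Measure.quasiMeasurePreserving_snd.ae hf0, Measure.quasiMeasurePreserving_fst.ae hg0,
    Measure.quasiMeasurePreserving_snd.ae hg0]
    with p hf1 hf2 hg1 hg2
  exact abs_add_sub_add_div_le hf1 hf2 hg1 hg2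

end

theorem kappa_map_eq_self {μ : Measure ℝ} [SFinite μ] {f : ℝ → ℝ} (hf : Measurable f)
    (h : ∀ x y, |(f x - f y) / (f x + f y)| = |(x - y) / (x + y)|) :
    kappa (μ.map f) = kappa μ := by
  simp only [kappa_map hf, h]
  rfl

/-- (a) subadditivity of `κ` under sums of (possibly dependent) nonnegative variables,
(b) scale invariance `κ(λX) = κ(X)` for `λ > 0`, and
(c) inversion invariance `κ(1/X) = κ(X)` for a.s. positive `X`. -/
theorem kappa_props :
    (∀ (μ : Measure (ℝ × ℝ)), IsProbabilityMeasure μ → (∀ᵐ p ∂μ, 0 ≤ p.1 ∧ 0 ≤ p.2) →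
      kappa (μ.map (fun p => p.1 + p.2)) ≤ kappa (μ.map Prod.fst) + kappa (μ.map Prod.snd)) ∧
    (∀ (μ : Measure ℝ), IsProbabilityMeasure μ → (∀ᵐ x ∂μ, 0 ≤ x) → ∀ l : ℝ, 0 < l →
      kappa (μ.map (fun x => l * x)) = kappa μ) ∧
    (∀ (μ : Measure ℝ), IsProbabilityMeasure μ → (∀ᵐ x ∂μ, 0 < x) →
      kappa (μ.map (fun x => 1 / x)) = kappa μ) := by
  refine ⟨fun μ _ h0 => ?_, fun μ _ _ l hl => ?_, fun μ _ _ => ?_⟩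
  · exact kappa_map_add_le measurable_fst measurable_snd (h0.mono fun _ h => h.1)
      (h0.mono fun _ h => h.2)
  · exact kappa_map_eq_self (measurable_const_mul l) (abs_mul_sub_div_mul_add hl.ne')
  · exact kappa_map_eq_self (by fun_prop) abs_one_div_sub_div_one_div_add
end

section
/- The extinction probability map $P \mapsto \pi_e(P)$, defined on probability measures on the non-negative integers as the smallest fixed point in $[0,1]$ of the generating function $\varphi_P(x) = \sum_{k \geq 0} P(k) x^k$, is continuous with respect to weak convergence at every $P \neq \delta_1$: if $P_n \to P$ weakly and $P \neq \delta_1$, then $\pi_e(P_n) \to \pi_e(P)$. -/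
open MeasureTheory Filter Topology

/-- The probability generating function of a distribution on `ℕ`. -/
noncomputable def genFun (P : PMF ℕ) (x : ℝ) : ℝ := ∑' k, (P k).toReal * x ^ k

/-- The extinction probability: the smallest fixed point of the generating function
in `[0,1]`. -/
noncomputable def extinction (P : PMF ℕ) : ℝ :=
  sInf {x : ℝ | x ∈ Set.Icc (0 : ℝ) 1 ∧ genFun P x = x}

/-! For `t < 1` one has `1 - φ(t) = (1 - t) g(t)` with `g(t) = ∑ P(k) (1 + t + ⋯ + t^(k-1))`, a
series whose terms are nondecreasing in `t`. Hence `φ(t) ≤ t` iff `g(t) ≥ 1`, which persists as `t`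
increases; and two fixed points `s < t < 1` give `g(s) = g(t) = 1`, which kills `P(k)` for `k ≥ 2`
and leaves `P(1) = 1`. So for `P ≠ δ₁`, `φ > id` on `[0, π_e)` and `φ < id` on `(π_e, 1)`.
Evaluating `φ_{P_n} → φ_P` at one point on each side of `π_e(P)` transfers these strict
inequalities to `P_n`, which traps `π_e(P_n)` between the two points.
-/

open Finset Set

namespace PMF

variable {α : Type*}

lemma hasSum_toReal (P : PMF α) : HasSum (fun a => (P a).toReal) 1 := by
  have := ENNReal.hasSum_toReal P.tsum_coe_ne_top
  rwa [← ENNReal.tsum_toReal_eq P.apply_ne_top, P.tsum_coe, ENNReal.toReal_one] at this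

lemma toReal_apply_le_one (P : PMF α) (a : α) : (P a).toReal ≤ 1 :=
  ENNReal.toReal_le_of_le_ofReal zero_le_one (by simpa using P.coe_le_one a)

lemma eq_pure_of_apply_eq_one {P : PMF α} {a : α} (h : P a = 1) : P = pure a := by
  ext b
  rcases eq_or_ne b a with rfl | hb
  · rw [h, pure_apply_self]
  · rw [pure_apply_of_ne _ _ hb, apply_eq_zero_iff, (apply_eq_one_iff P a).1 h]
    exact hb

end PMF

section GeneratingFunction

variable (P : PMF ℕ) {s t x : ℝ}

lemma norm_genFun_term_le (k : ℕ) (hx : |x| ≤ 1) :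
    ‖(P k).toReal * x ^ k‖ ≤ (P k).toReal := by
  rw [norm_mul, norm_pow, Real.norm_of_nonneg ENNReal.toReal_nonneg, Real.norm_eq_abs]
  exact mul_le_of_le_one_right ENNReal.toReal_nonneg (pow_le_one₀ (abs_nonneg x) hx)

lemma summable_genFun (hx : |x| ≤ 1) : Summable fun k => (P k).toReal * x ^ k :=
  P.hasSum_toReal.summable.of_norm_bounded fun k => norm_genFun_term_le P k hx

lemma genFun_one : genFun P 1 = 1 := by
  simpa [genFun] using P.hasSum_toReal.tsum_eq

lemma genFun_nonneg (hx : 0 ≤ x) : 0 ≤ genFun P x :=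
  tsum_nonneg fun _ => mul_nonneg ENNReal.toReal_nonneg (pow_nonneg hx _)

lemma continuousOn_genFun : ContinuousOn (genFun P) (Icc (-1) 1) :=
  continuousOn_tsum (fun k => continuousOn_const.mul (continuousOn_pow k))
    P.hasSum_toReal.summable fun k _ hx => norm_genFun_term_le P k (abs_le.2 hx)

lemma tendsto_genFun {ι : Type*} {l : Filter ι} {P : ι → PMF ℕ} {Q : PMF ℕ}
    (hP : ∀ k, Tendsto (fun i => (P i k).toReal) l (𝓝 (Q k).toReal)) (hx : |x| < 1) :
    Tendsto (fun i => genFun (P i) x) l (𝓝 (genFun Q x)) :=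
  tendsto_tsum_of_dominated_convergence (summable_geometric_of_lt_one (abs_nonneg x) hx)
    (fun k => (hP k).mul_const _) <| .of_forall fun i k => by
      rw [norm_mul, norm_pow, Real.norm_of_nonneg ENNReal.toReal_nonneg, Real.norm_eq_abs]
      exact mul_le_of_le_one_left (by positivity) ((P i).toReal_apply_le_one k)

/-- `(1 - genFun P t) / (1 - t)`, the slope of the chord of `genFun P` from `t` to `1`, expanded
as a power series. -/
noncomputable def genFunSlope (t : ℝ) : ℝ := ∑' k, (P k).toReal * ∑ i ∈ range k, t ^ i

lemma hasSum_genFunSlope (ht0 : 0 ≤ t) (ht1 : t < 1) :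
    HasSum (fun k => (P k).toReal * ∑ i ∈ range k, t ^ i) ((1 - genFun P t) / (1 - t)) := by
  have hsum := (P.hasSum_toReal.sub
    (summable_genFun P (abs_le.2 ⟨by linarith, ht1.le⟩)).hasSum).div_const (1 - t)
  refine hsum.congr_fun fun k => ?_
  have := geom_sum_mul t k
  have h1t : 1 - t ≠ 0 := by linarith
  rw [eq_div_iff h1t]
  linear_combination -(P k).toReal * this

lemma genFunSlope_eq (ht0 : 0 ≤ t) (ht1 : t < 1) :
    genFunSlope P t = (1 - genFun P t) / (1 - t) :=
  (hasSum_genFunSlope P ht0 ht1).tsum_eq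

lemma genFun_le_self_iff (ht0 : 0 ≤ t) (ht1 : t < 1) :
    genFun P t ≤ t ↔ 1 ≤ genFunSlope P t := by
  rw [genFunSlope_eq P ht0 ht1, one_le_div (by linarith)]
  constructor <;> intro <;> linarith

lemma genFun_eq_self_iff (ht0 : 0 ≤ t) (ht1 : t < 1) :
    genFun P t = t ↔ genFunSlope P t = 1 := by
  rw [genFunSlope_eq P ht0 ht1, div_eq_one_iff_eq (by linarith)]
  constructor <;> intro <;> linarith

lemma genFunSlope_mono (hs : 0 ≤ s) (hst : s ≤ t) (ht : t < 1) :
    genFunSlope P s ≤ genFunSlope P t :=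
  hasSum_le
    (fun _ => mul_le_mul_of_nonneg_left (sum_le_sum fun i _ => pow_le_pow_left₀ hs hst i)
      ENNReal.toReal_nonneg)
    (hasSum_genFunSlope P hs (hst.trans_lt ht)).summable.hasSum
    (hasSum_genFunSlope P (hs.trans hst) ht).summable.hasSum

lemma eq_pure_one_of_genFun_eq_self (hs : 0 ≤ s) (hst : s < t) (ht : t < 1)
    (hfs : genFun P s = s) (hft : genFun P t = t) : P = PMF.pure 1 := by
  have hs1 : s < 1 := hst.trans ht
  have hone : ∀ x, 0 ≤ x → x < 1 → genFun P x = x →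
      HasSum (fun k => (P k).toReal * ∑ i ∈ range k, x ^ i) 1 := fun x hx0 hx1 hfx => by
    simpa [hfx, div_self (sub_ne_zero.2 hx1.ne')] using hasSum_genFunSlope P hx0 hx1
  have hgap : ∀ k, (P k).toReal * ((∑ i ∈ range k, t ^ i) - ∑ i ∈ range k, s ^ i) = 0 := by
    have hsum := (hone t (hs.trans hst.le) ht hft).sub (hone s hs hs1 hfs)
    simp_rw [← mul_sub, sub_self] at hsum
    refine congr_fun ((hasSum_zero_iff_of_nonneg fun k => ?_).1 hsum)
    exact mul_nonneg ENNReal.toReal_nonneg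
      (sub_nonneg.2 (sum_le_sum fun i _ => pow_le_pow_left₀ hs hst.le i))
  have hvanish : ∀ k ≠ 1, (P k).toReal * ∑ i ∈ range k, s ^ i = 0 := by
    rintro (_ | _ | k) hk
    · simp
    · contradiction
    · have hlt : ∑ i ∈ range (k + 2), s ^ i < ∑ i ∈ range (k + 2), t ^ i :=
        sum_lt_sum (fun i _ => pow_le_pow_left₀ hs hst.le i) ⟨1, by simp, by simpa⟩
      have := hgap (k + 2)
      rw [mul_eq_zero, sub_eq_zero] at this
      rw [this.resolve_right hlt.ne', zero_mul]
  have hP1 : (P 1).toReal = 1 := by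
    simpa using (hasSum_single 1 hvanish).unique (hone s hs hs1 hfs)
  exact PMF.eq_pure_of_apply_eq_one ((ENNReal.toReal_eq_one_iff _).1 hP1)

end GeneratingFunction

section Extinction

variable (P : PMF ℕ) {x : ℝ}

lemma isCompact_setOf_genFun_eq_self :
    IsCompact {x : ℝ | x ∈ Icc (0 : ℝ) 1 ∧ genFun P x = x} :=
  isCompact_Icc.of_isClosed_subset
    (isClosed_Icc.isClosed_eq
      ((continuousOn_genFun P).mono (Icc_subset_Icc (by norm_num) le_rfl)) continuousOn_id)
    fun _ hx => hx.1

lemma extinction_mem : extinction P ∈ Icc (0 : ℝ) 1 ∧ genFun P (extinction P) = extinction P :=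
  (isCompact_setOf_genFun_eq_self P).sInf_mem ⟨1, ⟨zero_le_one, le_rfl⟩, genFun_one P⟩

lemma extinction_le_of_genFun_le (hx0 : 0 ≤ x) (hx1 : x ≤ 1) (h : genFun P x ≤ x) :
    extinction P ≤ x := by
  obtain ⟨y, hy, hfy⟩ : ∃ y ∈ Icc 0 x, genFun P y - y = 0 :=
    intermediate_value_Icc' hx0
      (((continuousOn_genFun P).mono (Icc_subset_Icc (by norm_num) hx1)).sub continuousOn_id)
      ⟨sub_nonpos.2 h, by simpa using genFun_nonneg P le_rfl⟩
  exact (csInf_le (isCompact_setOf_genFun_eq_self P).bddBelow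
    ⟨⟨hy.1, hy.2.trans hx1⟩, sub_eq_zero.1 hfy⟩).trans hy.2

lemma genFun_le_self_of_extinction_le (hx : extinction P ≤ x) (hx1 : x ≤ 1) :
    genFun P x ≤ x := by
  obtain ⟨⟨hq0, -⟩, hfq⟩ := extinction_mem P
  rcases hx1.lt_or_eq with hx1 | rfl
  · rw [genFun_le_self_iff P (hq0.trans hx) hx1]
    calc 1 = genFunSlope P (extinction P) :=
          ((genFun_eq_self_iff P hq0 (hx.trans_lt hx1)).1 hfq).symm
      _ ≤ genFunSlope P x := genFunSlope_mono P hq0 hx hx1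
  · exact (genFun_one P).le

lemma genFun_lt_self_of_extinction_lt (hP : P ≠ PMF.pure 1) (hx : extinction P < x)
    (hx1 : x < 1) : genFun P x < x := by
  obtain ⟨⟨hq0, -⟩, hfq⟩ := extinction_mem P
  exact (genFun_le_self_of_extinction_le P hx.le hx1.le).lt_of_ne fun hfx =>
    hP (eq_pure_one_of_genFun_eq_self P hq0 hx hx1 hfq hfx)

end Extinction

/-- Continuity of the extinction probability with respect to weak convergence at
every `P ≠ δ₁`. -/
theorem extinction_continuous (P : ℕ → PMF ℕ) (Plim : PMF ℕ)
    (hweak : ∀ k, Tendsto (fun n => ((P n) k).toReal) atTop (𝓝 ((Plim k).toReal)))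
    (hne : Plim ≠ PMF.pure 1) :
    Tendsto (fun n => extinction (P n)) atTop (𝓝 (extinction Plim)) := by
  obtain ⟨⟨hq0, hq1⟩, -⟩ := extinction_mem Plim
  refine tendsto_order.2 ⟨fun a ha => ?_, fun b hb => ?_⟩
  · rcases lt_or_ge a 0 with ha0 | ha0
    · exact .of_forall fun n => ha0.trans_le (extinction_mem (P n)).1.1
    have ha1 : a < 1 := ha.trans_le hq1
    have hlim : a < genFun Plim a := lt_of_not_ge fun h =>
      ha.not_ge (extinction_le_of_genFun_le Plim ha0 ha1.le h)
    have hconv := tendsto_genFun hweak (abs_lt.2 ⟨by linarith, ha1⟩)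
    filter_upwards [hconv.eventually_const_lt hlim] with n hn
    exact lt_of_not_ge fun h => hn.not_ge (genFun_le_self_of_extinction_le (P n) h ha1.le)
  · rcases lt_or_ge 1 b with hb1 | hb1
    · exact .of_forall fun n => (extinction_mem (P n)).1.2.trans_lt hb1
    obtain ⟨x, hqx, hxb⟩ := exists_between hb
    have hx0 : 0 ≤ x := hq0.trans hqx.le
    have hx1 : x < 1 := hxb.trans_le hb1
    have hlim := genFun_lt_self_of_extinction_lt Plim hne hqx hx1
    have hconv := tendsto_genFun hweak (abs_lt.2 ⟨by linarith, hx1⟩)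
    filter_upwards [hconv.eventually_lt_const hlim] with n hn
    exact (extinction_le_of_genFun_le (P n) hx0 hx1.le hn.le).trans_lt hxb
end
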